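/- arXiv:1512.08390 — 6 statements merged into one kernel-verified Lean document; each statement's English description precedes it below -/
import Mathlib

section
/- Let k be a field of characteristic zero, let n ≥ 1, and let w_0, …, w_n be positive integers with d = w_0 + ⋯ + w_n. Suppose x_0, …, x_n ∈ k and λ ∈ k satisfy: (i) x_0^d + ⋯ + x_n^d = λ·∏_{i=0}^n x_i^{w_i}; (ii) for every i, d·x_i^{d−1} = λ·w_i·x_i^{w_i−1}·∏_{j≠i} x_j^{w_j}; and (iii) ∏_{i=0}^n x_i^{w_i} = 0. Then x_i = 0 for every i. (This is the Jacobian criterion showing that the total space of the Dwork family is smooth.) -/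
/-- Jacobian criterion: the total space of the Dwork family is smooth.
If all partial derivatives (with respect to the `xᵢ` and `λ`) of
`x₀^d + ⋯ + xₙ^d − λ·x₀^{w₀}⋯xₙ^{wₙ}` vanish at a point satisfying the equation,
then all coordinates `xᵢ` vanish. -/
theorem dwork_total_space_smooth
    (k : Type*) [Field k] [CharZero k]
    (n : ℕ) (hn : 1 ≤ n)
    (w : Fin (n + 1) → ℕ) (hw : ∀ i, 0 < w i)
    (d : ℕ) (hd : d = ∑ i, w i)
    (x : Fin (n + 1) → k) (lam : k)
    (h1 : ∑ i, x i ^ d = lam * ∏ i, x i ^ w i)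
    (h2 : ∀ i, (d : k) * x i ^ (d - 1) =
      lam * (w i : k) * x i ^ (w i - 1) * ∏ j ∈ Finset.univ.erase i, x j ^ w j)
    (h3 : ∏ i, x i ^ w i = 0) :
    ∀ i, x i = 0 := by
  -- some coordinate vanishes
  obtain ⟨j, -, hj⟩ := Finset.prod_eq_zero_iff.mp h3
  have hxj : x j = 0 := pow_eq_zero_iff (hw j).ne' |>.mp hj
  -- d ≥ 2
  have hd2 : 2 ≤ d := by
    have : Finset.univ.card • 1 ≤ ∑ i : Fin (n+1), w i :=
      Finset.card_nsmul_le_sum _ _ _ (fun i _ => hw i)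
    rw [Finset.card_univ, Fintype.card_fin, smul_eq_mul, mul_one] at this
    omega
  intro i
  rcases eq_or_ne i j with rfl | hij
  · exact hxj
  · have hzero : ∏ l ∈ Finset.univ.erase i, x l ^ w l = 0 :=
      Finset.prod_eq_zero (Finset.mem_erase.mpr ⟨(Ne.symm hij), Finset.mem_univ j⟩)
        (by simp [hxj, (hw j).ne'])
    have h := h2 i
    rw [hzero, mul_zero] at h
    have hdk : (d : k) ≠ 0 := Nat.cast_ne_zero.mpr (by omega)
    have : x i ^ (d - 1) = 0 := by
      rcases mul_eq_zero.mp h with h' | h'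
      · exact absurd h' hdk
      · exact h'
    exact pow_eq_zero_iff (by omega) |>.mp this
end

section
/- Let k be a field of characteristic zero, let n ≥ 1, and let w_0, …, w_n be positive integers with d = w_0 + ⋯ + w_n. Suppose x_0, …, x_n ∈ k, not all zero, and λ ∈ k satisfy: (i) x_0^d + ⋯ + x_n^d = λ·∏_{i=0}^n x_i^{w_i}; and (ii) for every i, d·x_i^{d−1} = λ·w_i·x_i^{w_i−1}·∏_{j≠i} x_j^{w_j}. Then λ ≠ 0 and x_i ≠ 0 for every i. -/
/-- At a singular point of a fiber of the Dwork family, the parameter `λ` and all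
projective coordinates `xᵢ` are nonzero. -/
theorem dwork_singular_point_coords_nonzero
    (k : Type*) [Field k] [CharZero k]
    (n : ℕ) (hn : 1 ≤ n)
    (w : Fin (n + 1) → ℕ) (hw : ∀ i, 0 < w i)
    (d : ℕ) (hd : d = ∑ i, w i)
    (x : Fin (n + 1) → k) (hx : ∃ i, x i ≠ 0) (lam : k)
    (h1 : ∑ i, x i ^ d = lam * ∏ i, x i ^ w i)
    (h2 : ∀ i, (d : k) * x i ^ (d - 1) =
      lam * (w i : k) * x i ^ (w i - 1) * ∏ j ∈ Finset.univ.erase i, x j ^ w j) :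
    lam ≠ 0 ∧ ∀ i, x i ≠ 0 := by
  have hd2 : 2 ≤ d := by
    calc 2 ≤ n + 1 := by omega
    _ = ∑ _i : Fin (n + 1), 1 := by simp
    _ ≤ ∑ i, w i := Finset.sum_le_sum fun i _ => hw i
    _ = d := hd.symm
  have hdk : (d : k) ≠ 0 := Nat.cast_ne_zero.mpr (by omega)
  have hxall : ∀ i, x i ≠ 0 := by
    by_contra h
    push_neg at h
    obtain ⟨i, hi⟩ := h
    obtain ⟨j, hj⟩ := hx
    have hij : i ≠ j := fun e => hj (e ▸ hi)
    have hprod : ∏ m ∈ Finset.univ.erase j, x m ^ w m = 0 := by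
      apply Finset.prod_eq_zero (Finset.mem_erase.mpr ⟨hij, Finset.mem_univ i⟩)
      rw [hi]
      exact zero_pow (hw i).ne'
    have := h2 j
    rw [hprod, mul_zero] at this
    have hxj : x j ^ (d - 1) = 0 := by
      rcases mul_eq_zero.mp this with h | h
      · exact absurd h hdk
      · exact h
    exact hj (pow_eq_zero_iff (by omega) |>.mp hxj)
  refine ⟨fun hlam => ?_, hxall⟩
  have := h2 0
  rw [hlam, zero_mul, zero_mul, zero_mul] at this
  have : x 0 ^ (d - 1) = 0 := by
    rcases mul_eq_zero.mp this with h | h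
    · exact absurd h hdk
    · exact h
  exact hxall 0 (pow_eq_zero_iff (by omega) |>.mp this)
end

section
/- Let k be a field of characteristic zero, let n ≥ 1, and let w_0, …, w_n be positive integers with d = w_0 + ⋯ + w_n. Let f = X_1^{w_1}⋯X_n^{w_n}·(1 − X_1 − ⋯ − X_n)^{w_0} ∈ k[X_1, …, X_n]. Suppose x_1, …, x_n ∈ k satisfy x_i ≠ 0 for every i and 1 − (x_1 + ⋯ + x_n) ≠ 0, and that all partial derivatives ∂f/∂X_i vanish at (x_1, …, x_n). Then x_i = w_i/d for every i, and consequently f(x_1, …, x_n) = d^{−d}·∏_{i=0}^n w_i^{w_i} = γ. (Hence the only critical value of f on the locus where f ≠ 0 is γ, so the family Z_{n,w} : f = λ is smooth over G_m ∖ {γ}.) -/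
open MvPolynomial

/-- The only critical point of `f = X₁^{w₁}⋯Xₙ^{wₙ}(1−X₁−⋯−Xₙ)^{w₀}` on the locus
where `f ≠ 0` is `xᵢ = wᵢ/d`, with critical value `γ = d^{−d}·∏ wᵢ^{wᵢ}`.
Hence the family `Zₙ,w : f = λ` is smooth over `Gₘ ∖ {γ}`. -/
theorem dwork_affine_family_critical_value
    (k : Type*) [Field k] [CharZero k]
    (n : ℕ) (hn : 1 ≤ n)
    (w0 : ℕ) (hw0 : 0 < w0) (w : Fin n → ℕ) (hw : ∀ i, 0 < w i)
    (d : ℕ) (hd : d = w0 + ∑ i, w i)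
    (f : MvPolynomial (Fin n) k)
    (hf : f = (∏ i, X i ^ w i) * (1 - ∑ i, X i) ^ w0)
    (x : Fin n → k) (hx : ∀ i, x i ≠ 0) (hx' : 1 - ∑ i, x i ≠ 0)
    (hcrit : ∀ i, eval x (pderiv i f) = 0) :
    (∀ i, x i = (w i : k) / (d : k)) ∧
      eval x f = ((w0 : k) ^ w0 * ∏ i, (w i : k) ^ w i) / (d : k) ^ d := by
  classical
  set P : MvPolynomial (Fin n) k := ∏ i, X i ^ w i with hP
  set Q : MvPolynomial (Fin n) k := 1 - ∑ i, X i with hQ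
  -- derivative facts
  have hQd : ∀ i, pderiv i Q = -1 := by
    intro i
    rw [hQ]
    rw [map_sub, map_sum]
    simp [pderiv_X, Pi.single_apply, Finset.sum_ite_eq']
  have hPd : ∀ i, X i * pderiv i P = (w i : MvPolynomial (Fin n) k) * P := by
    intro i
    have hsplit : P = X i ^ w i * ∏ j ∈ Finset.univ.erase i, X j ^ w j :=
      (Finset.mul_prod_erase Finset.univ
        (fun j => (X j ^ w j : MvPolynomial (Fin n) k)) (Finset.mem_univ i)).symm
    have hz : pderiv i (∏ j ∈ Finset.univ.erase i, (X j ^ w j : MvPolynomial (Fin n) k)) = 0 := by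
      apply Finset.prod_induction _ (fun q => pderiv i q = 0)
      · intro a b ha hb; rw [pderiv_mul, ha, hb]; ring
      · exact pderiv_one
      · intro j hj
        rw [pderiv_pow, pderiv_X_of_ne (Finset.ne_of_mem_erase hj)]
        ring
    have hXpow : X i * (X i : MvPolynomial (Fin n) k) ^ (w i - 1) = X i ^ w i := by
      rw [← pow_succ', Nat.sub_add_cancel (hw i)]
    rw [hsplit, pderiv_mul, hz, pderiv_pow, pderiv_X_self]
    linear_combination ((w i : MvPolynomial (Fin n) k) *
      ∏ j ∈ Finset.univ.erase i, X j ^ w j) * hXpow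
  have hQpow : Q * Q ^ (w0 - 1) = Q ^ w0 := by
    rw [← pow_succ', Nat.sub_add_cancel hw0]
  have key : ∀ i, X i * Q * pderiv i f =
      ((w i : MvPolynomial (Fin n) k) * Q - (w0 : MvPolynomial (Fin n) k) * X i) * f := by
    intro i
    rw [hf, pderiv_mul, pderiv_pow, hQd]
    linear_combination (Q ^ w0 * Q) * hPd i -
      ((w0 : MvPolynomial (Fin n) k) * X i * P) * hQpow
  -- evaluate
  set Qx : k := 1 - ∑ i, x i with hQx
  have hevQ : eval x Q = Qx := by simp [hQ, hQx]
  have hevP : eval x P = ∏ i, x i ^ w i := by simp [hP]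
  have hevf : eval x f = (∏ i, x i ^ w i) * Qx ^ w0 := by
    rw [hf, map_mul, map_pow, hevP, hevQ]
  have hfx : eval x f ≠ 0 := by
    rw [hevf]
    exact mul_ne_zero (Finset.prod_ne_zero_iff.2 fun i _ => pow_ne_zero _ (hx i))
      (pow_ne_zero _ hx')
  have heq : ∀ i, (w i : k) * Qx = (w0 : k) * x i := by
    intro i
    have h := congrArg (eval x) (key i)
    simp only [map_mul, map_sub, map_natCast, eval_X, hcrit i, mul_zero, hevQ] at h
    have h2 := (mul_eq_zero.1 h.symm).resolve_right hfx
    linear_combination h2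
  -- sum
  have hdne : (d : k) ≠ 0 := Nat.cast_ne_zero.2 (by omega)
  have hQxval : Qx * d = (w0 : k) := by
    have hsum : (∑ i, (w i : k)) * Qx = (w0 : k) * (1 - Qx) := by
      rw [Finset.sum_mul]
      simp_rw [heq]
      rw [← Finset.mul_sum, hQx]
      ring
    have hdcast : (d : k) = (w0 : k) + ∑ i, (w i : k) := by
      rw [hd]; push_cast; ring
    rw [hdcast]; linear_combination hsum
  have hQxd : Qx = (w0 : k) / d := by
    rw [eq_div_iff hdne]; exact hQxval
  have hw0ne : (w0 : k) ≠ 0 := Nat.cast_ne_zero.2 hw0.ne'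
  have hxi : ∀ i, x i = (w i : k) / d := by
    intro i
    rw [eq_div_iff hdne]
    have h3 : (w0 : k) * (x i * (d : k)) = (w0 : k) * (w i : k) := by
      linear_combination (-(d : k)) * heq i + (w i : k) * hQxval
    exact mul_left_cancel₀ hw0ne h3
  refine ⟨hxi, ?_⟩
  rw [hevf, hQxd]
  have hprod : (∏ i, x i ^ w i) = (∏ i, (w i : k) ^ w i) / (d : k) ^ (∑ i, w i) := by
    rw [← Finset.prod_pow_eq_pow_sum, ← Finset.prod_div_distrib]
    exact Finset.prod_congr rfl fun i _ => by rw [hxi i, div_pow]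
  rw [hprod, div_pow, hd, pow_add]
  ring
end

section
/- Let k be an algebraically closed field of characteristic zero, let a and b be positive integers, and let μ ∈ k with μ ≠ 0 and μ·(a+b)^{a+b} ≠ a^a·b^b. Then the polynomial X^a·(1−X)^b − μ ∈ k[X] is squarefree of degree a+b; in particular it has exactly a+b distinct roots in k. (Hence the map x ↦ x^a(1−x)^b is étale of degree a+b away from the fibers over 0 and over a^a·b^b/(a+b)^{a+b}.) -/
/-!
At a multiple root `z` of `f = X^a (1-X)^b - μ` the derivative vanishes, and the identity
`X (1-X) f' = X^a (1-X)^b (a (1-X) - b X)` together with `z^a (1-z)^b = μ ≠ 0` forces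
`(a+b) z = a` and `(a+b)(1-z) = b`; hence `μ (a+b)^(a+b) = a^a b^b`. So `f` is separable, and
over an algebraically closed field its `a+b` roots are distinct.
-/

open Polynomial

theorem mul_derivative_pow {R : Type*} [CommSemiring R] (p : R[X]) (n : ℕ) :
    p * derivative (p ^ n) = C (n : R) * p ^ n * derivative p := by
  cases n with
  | zero => simp
  | succ n => rw [derivative_pow_succ]; push_cast; ring

section

variable {R : Type*} [CommRing R] (a b : ℕ)

theorem natDegree_pow_mul_one_sub_pow_sub_C [Nontrivial R] (μ : R) :
    (X ^ a * (1 - X) ^ b - C μ : R[X]).natDegree = a + b := by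
  rw [natDegree_sub_C]
  compute_degree!
  exact_mod_cast (isUnit_neg_one.pow b : IsUnit ((-1 : R) ^ b)).ne_zero

theorem X_mul_one_sub_X_mul_derivative_pow_mul_one_sub_pow :
    X * (1 - X) * derivative (X ^ a * (1 - X) ^ b : R[X]) =
      X ^ a * (1 - X) ^ b * (C (a : R) * (1 - X) - C (b : R) * X) := by
  have ha := mul_derivative_pow (X : R[X]) a
  have hb := mul_derivative_pow (1 - X : R[X]) b
  simp only [derivative_X, derivative_sub, derivative_one, mul_one] at ha hb
  rw [derivative_mul]
  linear_combination (1 - X) ^ (b + 1) * ha + X ^ (a + 1) * hb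

end

section

variable {K : Type*} [Field K] {a b : ℕ}

theorem pow_mul_one_sub_pow_mul_add_pow_eq_of_isRoot_derivative {z : K}
    (hz : (derivative (X ^ a * (1 - X) ^ b : K[X])).IsRoot z) (hz₀ : z ^ a * (1 - z) ^ b ≠ 0) :
    z ^ a * (1 - z) ^ b * ((a : K) + b) ^ (a + b) = (a : K) ^ a * (b : K) ^ b := by
  have h := congrArg (eval z) (X_mul_one_sub_X_mul_derivative_pow_mul_one_sub_pow (R := K) a b)
  simp only [eval_mul, eval_sub, eval_pow, eval_X, eval_one, eval_C, hz.eq_zero, mul_zero] at h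
  have hcrit : (a : K) * (1 - z) - b * z = 0 := (mul_eq_zero.mp h.symm).resolve_left hz₀
  calc z ^ a * (1 - z) ^ b * ((a : K) + b) ^ (a + b)
      = (z * (a + b)) ^ a * ((1 - z) * (a + b)) ^ b := by rw [mul_pow, mul_pow, pow_add]; ring
    _ = (a : K) ^ a * (b : K) ^ b := by
      rw [show z * (a + b) = a by linear_combination -hcrit,
        show (1 - z) * (a + b) = b by linear_combination hcrit]

theorem separable_pow_mul_one_sub_pow_sub_C {μ : K} (hμ : μ ≠ 0)
    (hμ' : μ * ((a : K) + b) ^ (a + b) ≠ (a : K) ^ a * (b : K) ^ b) :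
    (X ^ a * (1 - X) ^ b - C μ : K[X]).Separable := by
  let L := AlgebraicClosure K
  rw [separable_def, isCoprime_iff_aeval_ne_zero_of_isAlgClosed K L]
  intro z
  by_contra! ⟨hroot, hder⟩
  have hval : z ^ a * (1 - z) ^ b = algebraMap K L μ := by
    simpa [sub_eq_zero] using hroot
  have hder' : (derivative (X ^ a * (1 - X) ^ b : L[X])).IsRoot z := by
    simpa [aeval_def, eval₂_eq_eval_map, ← derivative_map] using hder
  have := pow_mul_one_sub_pow_mul_add_pow_eq_of_isRoot_derivative hder'
    (hval ▸ (_root_.map_ne_zero _).mpr hμ)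
  exact hμ' <| (algebraMap K L).injective <| by simpa [hval] using this

end

open Polynomial Classical in

theorem pow_mul_one_sub_pow_sub_const_squarefree_general
    (k : Type*) [Field k] [IsAlgClosed k]
    (a b : ℕ)
    (μ : k) (hμ : μ ≠ 0) (hμ' : μ * ((a : k) + b) ^ (a + b) ≠ (a : k) ^ a * (b : k) ^ b) :
    Squarefree (X ^ a * (1 - X) ^ b - C μ) ∧
      (X ^ a * (1 - X) ^ b - C μ : k[X]).natDegree = a + b ∧
      (X ^ a * (1 - X) ^ b - C μ : k[X]).roots.toFinset.card = a + b := by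
  have hsep := separable_pow_mul_one_sub_pow_sub_C hμ hμ'
  have hdeg := natDegree_pow_mul_one_sub_pow_sub_C a b μ
  refine ⟨hsep.squarefree, hdeg, ?_⟩
  rw [Multiset.toFinset_card_of_nodup (nodup_roots hsep), IsAlgClosed.card_roots_eq_natDegree,
    hdeg]

open Polynomial Classical in
/-- Away from the fibers over `0` and over the critical value `a^a·b^b/(a+b)^{a+b}`,
the polynomial `X^a(1−X)^b − μ` is squarefree of degree `a+b`, hence has exactly
`a+b` distinct roots; so `x ↦ x^a(1−x)^b` is étale of degree `a+b` there. -/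
theorem pow_mul_one_sub_pow_sub_const_squarefree
    (k : Type*) [Field k] [IsAlgClosed k] [CharZero k]
    (a b : ℕ) (ha : 0 < a) (hb : 0 < b)
    (μ : k) (hμ : μ ≠ 0) (hμ' : μ * ((a : k) + b) ^ (a + b) ≠ (a : k) ^ a * (b : k) ^ b) :
    Squarefree (X ^ a * (1 - X) ^ b - C μ) ∧
      (X ^ a * (1 - X) ^ b - C μ : k[X]).natDegree = a + b ∧
      (X ^ a * (1 - X) ^ b - C μ : k[X]).roots.toFinset.card = a + b :=
  pow_mul_one_sub_pow_sub_const_squarefree_general k a b μ hμ hμ'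
end

section
/- Let k be an algebraically closed field of characteristic zero, let a and b be positive integers, and let μ = a^a·b^b/(a+b)^{a+b} ∈ k. Then in the polynomial X^a·(1−X)^b − μ ∈ k[X], the element a/(a+b) is a root of multiplicity exactly 2, every other root is simple, and the polynomial has exactly a+b−1 distinct roots in k. -/
/-!
The derivative of `X^a (1-X)^b - μ` is `X^(a-1) (1-X)^(b-1) (a - (a+b) X)`. Since `μ ≠ 0`, no
root lies at `0` or `1`, so in characteristic zero a root `r` has multiplicity one more than its
multiplicity as a root of the linear factor `a - (a+b) X`, i.e. `2` at `c = a/(a+b)` and `1`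
elsewhere; and `c` is a root because `c^a (1-c)^b = μ`. Of the `a + b` roots counted with
multiplicity exactly one is double, leaving `a + b - 1` distinct roots.
-/

open Polynomial

theorem Multiset.card_eq_card_toFinset_add_one {α : Type*} [DecidableEq α] {s : Multiset α}
    {c : α} (hc : s.count c = 2) (h : ∀ x ∈ s, x ≠ c → s.count x = 1) :
    Multiset.card s = s.toFinset.card + 1 := by
  have hcs : c ∈ s.toFinset := Multiset.mem_toFinset.2 (Multiset.count_pos.1 (by omega))
  have hsimple : ∀ x ∈ s.toFinset.erase c, s.count x = 1 := fun x hx ↦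
    h x (Multiset.mem_toFinset.1 (Finset.mem_of_mem_erase hx)) (Finset.ne_of_mem_erase hx)
  rw [← Multiset.toFinset_sum_count_eq, ← Finset.add_sum_erase _ _ hcs, hc,
    Finset.sum_congr rfl hsimple, Finset.sum_const, smul_eq_mul, mul_one,
    Finset.card_erase_of_mem hcs]
  have := Finset.card_pos.2 ⟨c, hcs⟩
  omega

theorem div_add_pow_mul_one_sub_div_add_pow {k : Type*} [Field k] {x y : k} (hxy : x + y ≠ 0)
    (m n : ℕ) :
    (x / (x + y)) ^ m * (1 - x / (x + y)) ^ n = x ^ m * y ^ n / (x + y) ^ (m + n) := by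
  rw [one_sub_div hxy, add_sub_cancel_left, div_pow, div_pow, div_mul_div_comm, pow_add]

theorem derivative_X_pow_mul_one_sub_X_pow {R : Type*} [CommRing R] {a b : ℕ} (ha : 0 < a)
    (hb : 0 < b) : derivative (X ^ a * (1 - X) ^ b : R[X]) =
      X ^ (a - 1) * (1 - X) ^ (b - 1) * ((a : R[X]) - ((a : R[X]) + (b : R[X])) * X) := by
  obtain ⟨a, rfl⟩ : ∃ n, a = n + 1 := Nat.exists_eq_add_one_of_ne_zero ha.ne'
  obtain ⟨b, rfl⟩ : ∃ n, b = n + 1 := Nat.exists_eq_add_one_of_ne_zero hb.ne'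
  simp only [derivative_mul, derivative_pow, derivative_sub, derivative_one,
    derivative_X, C_eq_natCast, Nat.add_sub_cancel]
  push_cast
  ring

theorem natDegree_X_pow_mul_one_sub_X_pow_sub_C {R : Type*} [CommRing R] [IsDomain R] (a b : ℕ)
    (μ : R) : (X ^ a * (1 - X) ^ b - C μ : R[X]).natDegree = a + b := by
  have h1X : (1 - X : R[X]).natDegree = 1 := by
    rw [← neg_sub, natDegree_neg, ← C_1, natDegree_X_sub_C]
  rw [natDegree_sub_C, natDegree_mul (pow_ne_zero _ X_ne_zero)
    (pow_ne_zero _ (ne_zero_of_natDegree_gt (n := 0) (by omega))), natDegree_X_pow,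
    natDegree_pow, h1X, mul_one]

theorem X_pow_mul_one_sub_X_pow_sub_C_ne_zero {R : Type*} [CommRing R] [IsDomain R] {a b : ℕ}
    (hab : a + b ≠ 0) (μ : R) : (X ^ a * (1 - X) ^ b - C μ : R[X]) ≠ 0 :=
  ne_zero_of_natDegree_gt (n := 0) (by rw [natDegree_X_pow_mul_one_sub_X_pow_sub_C]; omega)

theorem natCast_sub_natCast_add_mul_X {k : Type*} [Field k] (a b : ℕ) (hab : (a : k) + b ≠ 0) :
    ((a : k[X]) - ((a : k[X]) + (b : k[X])) * X) =
      C (-((a : k) + b)) * (X - C ((a : k) / ((a : k) + b))) := by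
  rw [mul_sub, ← C_mul, neg_mul, mul_div_cancel₀ _ hab]
  simp only [map_neg, map_add, map_natCast]
  ring

section CharZero

variable {k : Type*} [Field k] [CharZero k] {a b : ℕ}

theorem rootMultiplicity_derivative_X_pow_mul_one_sub_X_pow (ha : 0 < a) (hb : 0 < b) {r : k}
    (hr₀ : r ≠ 0) (hr₁ : r ≠ 1) :
    (derivative (X ^ a * (1 - X) ^ b : k[X])).rootMultiplicity r =
      (X - C ((a : k) / ((a : k) + b))).rootMultiplicity r := by
  have hab : (a : k) + b ≠ 0 := by norm_cast; omega
  have hunit : (X ^ (a - 1) * (1 - X) ^ (b - 1) * C (-((a : k) + b))).eval r ≠ 0 := by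
    simp only [eval_mul, eval_pow, eval_X, eval_sub, eval_one, eval_C]
    exact mul_ne_zero (mul_ne_zero (pow_ne_zero _ hr₀) (pow_ne_zero _ (sub_ne_zero.2 hr₁.symm)))
      (neg_ne_zero.2 hab)
  rw [derivative_X_pow_mul_one_sub_X_pow ha hb, natCast_sub_natCast_add_mul_X a b hab,
    ← mul_assoc,
    rootMultiplicity_mul (mul_ne_zero (fun h ↦ hunit (by rw [h, eval_zero])) (X_sub_C_ne_zero _)),
    rootMultiplicity_eq_zero hunit, zero_add]

theorem rootMultiplicity_X_pow_mul_one_sub_X_pow_sub_C (ha : 0 < a) (hb : 0 < b) {μ : k}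
    (hμ : μ ≠ 0) {r : k} (hr : (X ^ a * (1 - X) ^ b - C μ : k[X]).IsRoot r) :
    (X ^ a * (1 - X) ^ b - C μ : k[X]).rootMultiplicity r =
      (X - C ((a : k) / ((a : k) + b))).rootMultiplicity r + 1 := by
  have hr' : r ^ a * (1 - r) ^ b = μ := by simpa [sub_eq_zero] using hr
  have hr₀ : r ≠ 0 := by
    rintro rfl
    rw [zero_pow ha.ne', zero_mul] at hr'
    exact hμ hr'.symm
  have hr₁ : r ≠ 1 := by
    rintro rfl
    rw [sub_self, zero_pow hb.ne', mul_zero] at hr'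
    exact hμ hr'.symm
  have hpos := (rootMultiplicity_pos (X_pow_mul_one_sub_X_pow_sub_C_ne_zero (by omega) μ)).2 hr
  have hderiv := derivative_rootMultiplicity_of_root hr
  rw [derivative_sub, derivative_C, sub_zero,
    rootMultiplicity_derivative_X_pow_mul_one_sub_X_pow ha hb hr₀ hr₁] at hderiv
  omega

end CharZero

open Polynomial Classical in
/-- At the critical value `μ = a^a·b^b/(a+b)^{a+b}`, the polynomial `X^a(1−X)^b − μ`
has `a/(a+b)` as a root of multiplicity exactly `2`, every other root is simple, and
it has exactly `a+b−1` distinct roots. -/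
theorem pow_mul_one_sub_pow_sub_critical_value_roots
    (k : Type*) [Field k] [IsAlgClosed k] [CharZero k]
    (a b : ℕ) (ha : 0 < a) (hb : 0 < b)
    (μ : k) (hμ : μ = (a : k) ^ a * (b : k) ^ b / ((a : k) + b) ^ (a + b)) :
    (X ^ a * (1 - X) ^ b - C μ : k[X]).rootMultiplicity ((a : k) / ((a : k) + b)) = 2 ∧
      (∀ r : k, (X ^ a * (1 - X) ^ b - C μ : k[X]).IsRoot r →
        r ≠ (a : k) / ((a : k) + b) →
        (X ^ a * (1 - X) ^ b - C μ : k[X]).rootMultiplicity r = 1) ∧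
      (X ^ a * (1 - X) ^ b - C μ : k[X]).roots.toFinset.card = a + b - 1 := by
  set f : k[X] := X ^ a * (1 - X) ^ b - C μ
  set c : k := (a : k) / ((a : k) + b)
  have hab : (a : k) + b ≠ 0 := by norm_cast; omega
  have hμ₀ : μ ≠ 0 := by
    rw [hμ]
    exact div_ne_zero (mul_ne_zero (pow_ne_zero _ (Nat.cast_ne_zero.2 ha.ne'))
      (pow_ne_zero _ (Nat.cast_ne_zero.2 hb.ne'))) (pow_ne_zero _ hab)
  have hc : f.IsRoot c := by
    simp [f, c, hμ, div_add_pow_mul_one_sub_div_add_pow hab]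
  have hmult : ∀ r, f.IsRoot r → f.rootMultiplicity r = if r = c then 2 else 1 := by
    intro r hr
    rw [rootMultiplicity_X_pow_mul_one_sub_X_pow_sub_C ha hb hμ₀ hr, rootMultiplicity_X_sub_C]
    split_ifs <;> rfl
  refine ⟨by simpa using hmult c hc, fun r hr hrc ↦ by simpa [hrc] using hmult r hr, ?_⟩
  have hf : f ≠ 0 := X_pow_mul_one_sub_X_pow_sub_C_ne_zero (by omega) μ
  have hcard := Multiset.card_eq_card_toFinset_add_one (s := f.roots) (c := c)
    (by rw [count_roots, hmult c hc, if_pos rfl])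
    (fun r hr hrc ↦ by rw [count_roots, hmult r ((mem_roots hf).1 hr), if_neg hrc])
  rw [← (IsAlgClosed.splits f).natDegree_eq_card_roots,
    natDegree_X_pow_mul_one_sub_X_pow_sub_C] at hcard
  omega
end

section
/- Let k be a field of characteristic zero, let n ≥ 1, and let w_0, …, w_n be positive integers. In k[x_1, …, x_n], set σ = x_1 + ⋯ + x_n and l_i = w_i·σ + w_0·x_i for 1 ≤ i ≤ n. Suppose a_1, …, a_n ∈ k[x_1, …, x_n] satisfy Σ_{i=1}^n a_i · (x_i^{w_i−1}·∏_{j≠i} x_j^{w_j}) · l_i = 0. Then x_i divides a_i for every i = 1, …, n. -/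
/-!
For `j ≠ i` the `j`-th summand contains the factor `xᵢ^{wᵢ}`, hence so does the `i`-th one,
and cancelling `xᵢ^{wᵢ-1}` gives `xᵢ ∣ aᵢ · ∏_{j≠i} xⱼ^{wⱼ} · lᵢ`. The prime `xᵢ` divides neither
the product nor `lᵢ`: when some `j ≠ i` exists, `lᵢ` evaluated at the unit vector `eⱼ` is
`wᵢ ≠ 0`. When `n = 1` the relation has a single term and `lᵢ ≠ 0` forces `aᵢ = 0`.
-/

open MvPolynomial

theorem Finset.dvd_of_sum_eq_zero {ι R : Type*} [CommRing R] {s : Finset ι} {f : ι → R}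
    {p : R} {i : ι} (hs : ∑ j ∈ s, f j = 0) (hi : i ∈ s) (h : ∀ j ∈ s, j ≠ i → p ∣ f j) :
    p ∣ f i := by
  classical
  rw [← Finset.add_sum_erase s f hi, add_eq_zero_iff_eq_neg] at hs
  rw [hs, dvd_neg]
  exact Finset.dvd_sum fun j hj => h j (Finset.mem_of_mem_erase hj) (Finset.ne_of_mem_erase hj)

theorem dvd_of_pow_dvd_pow_pred_mul {M : Type*} [CommMonoidWithZero M] [IsCancelMulZero M]
    {p b : M} {m : ℕ} (hp : p ≠ 0) (hm : 0 < m) (h : p ^ m ∣ p ^ (m - 1) * b) : p ∣ b := by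
  obtain _ | m := m
  · omega
  rw [Nat.add_sub_cancel, pow_succ] at h
  exact (mul_dvd_mul_iff_left (pow_ne_zero _ hp)).mp h

namespace MvPolynomial

variable {ι R : Type*}

theorem X_not_dvd_prod_erase_X_pow [CommRing R] [IsDomain R] [DecidableEq ι]
    (s : Finset ι) (w : ι → ℕ) (i : ι) :
    ¬ (X i : MvPolynomial ι R) ∣ ∏ j ∈ s.erase i, X j ^ w j := by
  rw [X_prime.dvd_finsetProd_iff]
  rintro ⟨j, hj, hdvd⟩
  exact Finset.ne_of_mem_erase hj (X_dvd_X.mp (X_prime.dvd_of_dvd_pow hdvd)).symm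

theorem X_pow_dvd_X_pow_mul_prod_erase [CommSemiring R] [DecidableEq ι]
    (s : Finset ι) (w : ι → ℕ) {i j : ι} (hi : i ∈ s) (hij : i ≠ j) (e : ℕ) :
    (X i : MvPolynomial ι R) ^ w i ∣ X j ^ e * ∏ m ∈ s.erase j, X m ^ w m :=
  (Finset.dvd_prod_of_mem (fun m => X m ^ w m) (Finset.mem_erase.mpr ⟨hij, hi⟩)).mul_left _

theorem eval_piSingle_natCast_mul_sum_X_add [Fintype ι] [DecidableEq ι] [CommSemiring R]
    (c d : ℕ) (i j : ι) :
    eval (Pi.single j 1) ((c : MvPolynomial ι R) * ∑ m, X m + (d : MvPolynomial ι R) * X i) =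
      (c : R) + d * (Pi.single j 1 : ι → R) i := by
  simp [Finset.sum_pi_single']

theorem X_not_dvd_natCast_mul_sum_X_add [Fintype ι] [DecidableEq ι] [CommSemiring R]
    [CharZero R] {c : ℕ} (hc : c ≠ 0) (d : ℕ) {i j : ι} (hij : i ≠ j) :
    ¬ (X i : MvPolynomial ι R) ∣
      (c : MvPolynomial ι R) * ∑ m, X m + (d : MvPolynomial ι R) * X i := by
  rintro ⟨q, hq⟩
  have := eval_piSingle_natCast_mul_sum_X_add (R := R) c d i j
  simp only [hq, map_mul, eval_X, hij, Pi.single_eq_of_ne, ne_eq, not_false_eq_true, zero_mul,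
    mul_zero, add_zero] at this
  exact hc (Nat.cast_eq_zero.mp this.symm)

theorem natCast_mul_sum_X_add_ne_zero [Fintype ι] [DecidableEq ι] [CommSemiring R] [CharZero R]
    {c : ℕ} (hc : c ≠ 0) (d : ℕ) (i : ι) :
    (c : MvPolynomial ι R) * ∑ m, X m + (d : MvPolynomial ι R) * X i ≠ 0 := by
  intro h
  have := eval_piSingle_natCast_mul_sum_X_add (R := R) c d i i
  rw [h] at this
  simp only [map_zero, Pi.single_eq_same, mul_one] at this
  norm_cast at this
  omega

end MvPolynomial

theorem syzygy_divisibility_general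
    (k : Type*) [Field k] [CharZero k]
    (n : ℕ)
    (w0 : ℕ) (w : Fin n → ℕ) (hw : ∀ i, 0 < w i)
    (σ : MvPolynomial (Fin n) k) (l : Fin n → MvPolynomial (Fin n) k)
    (hσ : σ = ∑ i, X i)
    (hl : ∀ i, l i = (w i : MvPolynomial (Fin n) k) * σ + (w0 : MvPolynomial (Fin n) k) * X i)
    (a : Fin n → MvPolynomial (Fin n) k)
    (ha : ∑ i, a i * (X i ^ (w i - 1) * ∏ j ∈ Finset.univ.erase i, X j ^ w j) * l i = 0) :
    ∀ i, X i ∣ a i := by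
  intro i
  subst hσ
  rcases em (∃ j, j ≠ i) with ⟨j, hji⟩ | hsingle
  · have hterm : X i ^ w i ∣
        X i ^ (w i - 1) * (l i * (a i * ∏ j ∈ Finset.univ.erase i, X j ^ w j)) := by
      have := Finset.dvd_of_sum_eq_zero (i := i) ha (Finset.mem_univ i) fun m _ hmi =>
        ((X_pow_dvd_X_pow_mul_prod_erase _ w (Finset.mem_univ i) hmi.symm _).mul_left
          (a m)).mul_right (l m)
      rwa [mul_left_comm, mul_right_comm, mul_assoc] at this
    have hl_not : ¬ X i ∣ l i := by
      rw [hl i]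
      exact X_not_dvd_natCast_mul_sum_X_add (hw i).ne' w0 hji.symm
    have h := dvd_of_pow_dvd_pow_pred_mul (X_ne_zero i) (hw i) hterm
    exact (X_prime.dvd_or_dvd ((X_prime.dvd_or_dvd h).resolve_left hl_not)).resolve_right
      (X_not_dvd_prod_erase_X_pow _ w i)
  · push Not at hsingle
    have hl0 : l i ≠ 0 := by
      rw [hl i]
      exact natCast_mul_sum_X_add_ne_zero (hw i).ne' w0 i
    rw [Finset.sum_eq_single i (fun j _ hji => absurd (hsingle j) hji) (by simp)] at ha
    have hP : ∏ j ∈ Finset.univ.erase i, (X j : MvPolynomial (Fin n) k) ^ w j = 1 :=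
      Finset.prod_eq_one fun j hj => absurd (hsingle j) (Finset.ne_of_mem_erase hj)
    have hai : a i = 0 := by simpa [hP, hl0, X_ne_zero] using ha
    simp [hai]

/-- If `∑ aᵢ · x^{w−eᵢ} · lᵢ = 0` with `lᵢ = wᵢ·(x₁+⋯+xₙ) + w₀·xᵢ`, then `xᵢ ∣ aᵢ`
for every `i`. -/
theorem syzygy_divisibility
    (k : Type*) [Field k] [CharZero k]
    (n : ℕ) (hn : 1 ≤ n)
    (w0 : ℕ) (hw0 : 0 < w0) (w : Fin n → ℕ) (hw : ∀ i, 0 < w i)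
    (σ : MvPolynomial (Fin n) k) (l : Fin n → MvPolynomial (Fin n) k)
    (hσ : σ = ∑ i, X i)
    (hl : ∀ i, l i = (w i : MvPolynomial (Fin n) k) * σ + (w0 : MvPolynomial (Fin n) k) * X i)
    (a : Fin n → MvPolynomial (Fin n) k)
    (ha : ∑ i, a i * (X i ^ (w i - 1) * ∏ j ∈ Finset.univ.erase i, X j ^ w j) * l i = 0) :
    ∀ i, X i ∣ a i :=
  syzygy_divisibility_general k n w0 w hw σ l hσ hl a ha
end
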